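/- The ground α-equivalence relation ≈ on nominal terms is symmetric: if t ≈ u then u ≈ t. -/

import Mathlib

/-- Ground nominal terms: t ::= a | f(t₁,...,tₙ) | ⟨a⟩t.
Names and function symbols are both modeled as natural numbers. -/
inductive NTerm : Type
  | name : ℕ → NTerm
  | fn   : ℕ → List NTerm → NTerm
  | abs  : ℕ → NTerm → NTerm

/-- Action of the swapping (a b) on a name. -/
def swapName (a b c : ℕ) : ℕ := if c = a then b else if c = b then a else c

/-- Swapping (a b)·t on ground nominal terms. -/
def NTerm.swap (a b : ℕ) : NTerm → NTerm
  | .name c  => .name (swapName a b c)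
  | .fn f ts => .fn f (ts.attach.map (fun x => NTerm.swap a b x.1))
  | .abs c t => .abs (swapName a b c) (NTerm.swap a b t)
decreasing_by
  all_goals simp_wf
  have := List.sizeOf_lt_of_mem x.2
  omega

/-- The freshness relation a # t on ground nominal terms. -/
inductive Fresh : ℕ → NTerm → Prop
  | name {a b : ℕ} : a ≠ b → Fresh a (.name b)
  | fn {a f} {ts : List NTerm} : (∀ t ∈ ts, Fresh a t) → Fresh a (.fn f ts)
  | absSame {a t} : Fresh a (.abs a t)
  | absDiff {a b t} : a ≠ b → Fresh a t → Fresh a (.abs b t)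

/-- Ground α-equivalence t ≈ u on nominal terms. -/
inductive Aeq : NTerm → NTerm → Prop
  | name (a : ℕ) : Aeq (.name a) (.name a)
  | fn {f} {ts us : List NTerm} : List.Forall₂ Aeq ts us → Aeq (.fn f ts) (.fn f us)
  | absSame {a t u} : Aeq t u → Aeq (.abs a t) (.abs a u)
  | absDiff {a b t u} : a ≠ b → Fresh a u → Aeq t (u.swap a b) →
      Aeq (.abs a t) (.abs b u)

/-!
Induction on `t ≈ u`. The only nontrivial case is `⟨a⟩t ≈ ⟨b⟩u` from `a # u` and
`t ≈ (a b)·u`. By induction `(a b)·u ≈ t`; applying the swapping `(a b)` to both sides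
(`≈` is equivariant) gives `u ≈ (a b)·t = (b a)·t`, and `b # t` holds because
`b # (a b)·u` and `≈` transports freshness from left to right.
-/

theorem List.Forall₂.forall_mem_right {α β : Type*} {R : α → β → Prop} {p : α → Prop}
    {q : β → Prop} {l₁ : List α} {l₂ : List β} (h : List.Forall₂ R l₁ l₂)
    (hpq : ∀ a b, R a b → p a → q b) (hp : ∀ a ∈ l₁, p a) : ∀ b ∈ l₂, q b := by
  induction h with
  | nil => simp
  | cons hab _ ih =>
    simp only [List.mem_cons, forall_eq_or_imp] at hp ⊢
    exact ⟨hpq _ _ hab hp.1, ih hp.2⟩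

theorem swapName_eq_swap (a b c : ℕ) : swapName a b c = Equiv.swap a b c :=
  (Equiv.swap_apply_def a b c).symm

theorem swapName_swapName (a b c : ℕ) : swapName a b (swapName a b c) = c := by
  simp [swapName_eq_swap]

theorem swapName_comm (a b c : ℕ) : swapName a b c = swapName b a c := by
  simp [swapName_eq_swap, Equiv.swap_comm]

theorem swapName_injective (a b : ℕ) : Function.Injective (swapName a b) := by
  simpa [funext (swapName_eq_swap a b)] using (Equiv.swap a b).injective

theorem swapName_swapName_swapName (a b c d e : ℕ) :
    swapName a b (swapName c d e) =
      swapName (swapName a b c) (swapName a b d) (swapName a b e) := by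
  simp [swapName_eq_swap, Equiv.swap_apply_apply]

namespace NTerm

-- `NTerm` is nested through `List`, so its generated recursor needs a motive for lists too.
@[elab_as_elim]
theorem induction_mem {P : NTerm → Prop} (name : ∀ a, P (name a))
    (fn : ∀ f ts, (∀ t ∈ ts, P t) → P (fn f ts)) (abs : ∀ a t, P t → P (abs a t)) :
    ∀ t, P t :=
  NTerm.rec (motive_2 := fun ts => ∀ t ∈ ts, P t) name fn abs (by simp)
    (fun _ _ hhead htail => by simpa using ⟨hhead, htail⟩)

@[simp] theorem swap_name (a b c : ℕ) : (name c).swap a b = name (swapName a b c) := by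
  rw [swap]

@[simp] theorem swap_fn (a b f : ℕ) (ts : List NTerm) :
    (fn f ts).swap a b = fn f (ts.map (swap a b)) := by
  rw [swap]; simp

@[simp] theorem swap_abs (a b c : ℕ) (t : NTerm) :
    (abs c t).swap a b = abs (swapName a b c) (t.swap a b) := by
  rw [swap]

@[simp] theorem swap_swap (a b : ℕ) (t : NTerm) : (t.swap a b).swap a b = t := by
  induction t using induction_mem with
  | name => simp [swapName_swapName]
  | fn f ts ih => simpa [Function.comp_def] using List.map_congr_left ih
  | abs c t ih => simp [swapName_swapName, ih]

theorem swap_comm (a b : ℕ) (t : NTerm) : t.swap a b = t.swap b a := by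
  induction t using induction_mem with
  | name => simp [swapName_comm]
  | fn f ts ih => simpa using List.map_congr_left ih
  | abs c t ih => simp [swapName_comm, ih]

theorem swap_swap_eq_swap_swap (a b c d : ℕ) (t : NTerm) :
    (t.swap c d).swap a b = (t.swap a b).swap (swapName a b c) (swapName a b d) := by
  induction t using induction_mem with
  | name => simp only [swap_name]; rw [swapName_swapName_swapName]
  | fn f ts ih => simpa using List.map_congr_left ih
  | abs e t ih => simp only [swap_abs]; rw [swapName_swapName_swapName, ih]

end NTerm

open NTerm

theorem Fresh.swap {c : ℕ} {t : NTerm} (a b : ℕ) (h : Fresh c t) :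
    Fresh (swapName a b c) (t.swap a b) := by
  induction h with
  | name hne => rw [swap_name]; exact .name ((swapName_injective a b).ne hne)
  | fn _ ih => rw [swap_fn]; exact .fn (List.forall_mem_map.mpr ih)
  | absSame => rw [swap_abs]; exact .absSame
  | absDiff hne _ ih => rw [swap_abs]; exact .absDiff ((swapName_injective a b).ne hne) ih

theorem Fresh.of_swap {c a b : ℕ} {t : NTerm} (h : Fresh c (t.swap a b)) (ha : c ≠ a)
    (hb : c ≠ b) : Fresh c t := by
  simpa [swapName, ha, hb] using h.swap a b

-- `Aeq` is nested through `List.Forall₂`, which the `induction` tactic does not support.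
@[elab_as_elim]
theorem Aeq.induction_forall₂ {P : (t u : NTerm) → Aeq t u → Prop}
    (name : ∀ a, P _ _ (.name a))
    (fn : ∀ {f ts us} (hs : List.Forall₂ Aeq ts us),
      List.Forall₂ (fun t u => ∃ h : Aeq t u, P t u h) ts us → P _ _ (.fn (f := f) hs))
    (absSame : ∀ {a t u} (h : Aeq t u), P t u h → P _ _ (.absSame (a := a) h))
    (absDiff : ∀ {a b t u} (hab : a ≠ b) (hau : Fresh a u) (h : Aeq t (u.swap a b)),
      P t (u.swap a b) h → P _ _ (.absDiff hab hau h))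
    {t u : NTerm} (h : Aeq t u) : P t u h :=
  Aeq.rec (motive_2 := fun ts us _ => List.Forall₂ (fun t u => ∃ h : Aeq t u, P t u h) ts us)
    name fn absSame absDiff .nil (fun h _ ih ihs => .cons ⟨h, ih⟩ ihs) h

theorem Aeq.fresh {a : ℕ} {t u : NTerm} (h : Aeq t u) (ha : Fresh a t) : Fresh a u := by
  induction h using Aeq.induction_forall₂ generalizing a with
  | name => exact ha
  | fn _ hs =>
    cases ha with
    | fn ha => exact .fn (hs.forall_mem_right (fun _ _ ⟨_, h⟩ hat => h hat) ha)
  | absSame _ ih =>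
    cases ha with
    | absSame => exact .absSame
    | absDiff hne ha => exact .absDiff hne (ih ha)
  | @absDiff c d t u hcd hcu _ ih =>
    cases ha with
    | absSame => exact .absDiff hcd hcu
    | absDiff hac ha =>
      by_cases had : a = d
      · exact had ▸ .absSame
      · exact .absDiff had ((ih ha).of_swap hac had)

theorem Aeq.swap {t u : NTerm} (a b : ℕ) (h : Aeq t u) : Aeq (t.swap a b) (u.swap a b) := by
  induction h using Aeq.induction_forall₂ with
  | name => simpa using Aeq.name _
  | fn _ hs =>
    simp only [swap_fn]
    exact .fn <| List.forall₂_map_left_iff.mpr <| List.forall₂_map_right_iff.mpr <|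
      hs.imp fun _ _ ⟨_, h⟩ => h
  | absSame _ ih => simpa using Aeq.absSame ih
  | absDiff hne hfresh _ ih =>
    rw [swap_swap_eq_swap_swap] at ih
    simpa using Aeq.absDiff ((swapName_injective a b).ne hne) (hfresh.swap a b) ih

/-- ground α-equivalence is symmetric. -/
theorem aeq_symm (t u : NTerm) (h : Aeq t u) : Aeq u t := by
  induction h using Aeq.induction_forall₂ with
  | name a => exact .name a
  | fn _ hs => exact .fn (hs.imp fun _ _ ⟨_, h⟩ => h).flip
  | absSame _ ih => exact .absSame ih
  | @absDiff a b t u hab hau _ ih =>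
    have hbu : Fresh b (u.swap a b) := by simpa [swapName] using hau.swap a b
    refine .absDiff (Ne.symm hab) (ih.fresh hbu) ?_
    simpa [swap_comm b a] using ih.swap a b
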